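/- Let 𝒜 and ℬ be sets of pointed Kripke models and let m, k be natural numbers. Then player S has a winning strategy in the formula size game FS_{m,k}(𝒜, ℬ) if and only if there is a formula φ of basic modal logic ML with ms(φ) ≤ m and cs(φ) ≤ k that separates the sets 𝒜 and ℬ. -/
import Mathlib


universe u v

/-- A Kripke model for a set `Φ` of proposition symbols: a set of worlds `W`,
an accessibility relation `R` and a valuation `V`. -/
structure KripkeModel (Φ : Type) : Type (u + 1) where
  W : Type u
  R : W → W → Prop
  V : Φ → W → Prop

/-- A pointed Kripke model: a Kripke model together with a distinguished world. -/
structure PointedModel (Φ : Type) : Type (u + 1) where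
  M : KripkeModel.{u} Φ
  w : M.W

/-- Formulas of basic modal logic in negation normal form:
`φ ::= p | ¬p | (φ ∧ φ) | (φ ∨ φ) | ◇φ | □φ`. -/
inductive MLFormula (Φ : Type) : Type where
  | pos (p : Φ)
  | neg (p : Φ)
  | and (φ ψ : MLFormula Φ)
  | or (φ ψ : MLFormula Φ)
  | dia (φ : MLFormula Φ)
  | box (φ : MLFormula Φ)

/-- Standard Kripke semantics for basic modal logic. -/
def MLSat {Φ : Type} (M : KripkeModel.{u} Φ) : M.W → MLFormula Φ → Prop
  | w, .pos p => M.V p w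
  | w, .neg p => ¬ M.V p w
  | w, .and φ ψ => MLSat M w φ ∧ MLSat M w ψ
  | w, .or φ ψ => MLSat M w φ ∨ MLSat M w ψ
  | w, .dia φ => ∃ x, M.R w x ∧ MLSat M x φ
  | w, .box φ => ∀ x, M.R w x → MLSat M x φ

/-- Literals are the formulas `p` and `¬p`. -/
def IsLiteral {Φ : Type} : MLFormula Φ → Prop
  | .pos _ => True
  | .neg _ => True
  | _ => False

/-- The modal size `ms(φ)`: the number of modal operators `◇`, `□` in `φ`. -/
def msize {Φ : Type} : MLFormula Φ → ℕ
  | .pos _ => 0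
  | .neg _ => 0
  | .and φ ψ => msize φ + msize ψ
  | .or φ ψ => msize φ + msize ψ
  | .dia φ => msize φ + 1
  | .box φ => msize φ + 1

/-- The connective size `cs(φ)`: the number of binary connectives `∧`, `∨` in `φ`. -/
def csize {Φ : Type} : MLFormula Φ → ℕ
  | .pos _ => 0
  | .neg _ => 0
  | .and φ ψ => csize φ + csize ψ + 1
  | .or φ ψ => csize φ + csize ψ + 1
  | .dia φ => csize φ
  | .box φ => csize φ

/-- A formula `φ` separates the sets `A` and `B` of pointed models if `φ` is true in
every model of `A` and false in every model of `B`. -/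
def Separates {Φ : Type} (φ : MLFormula Φ) (A B : Set (PointedModel.{u} Φ)) : Prop :=
  (∀ P ∈ A, MLSat P.M P.w φ) ∧ (∀ P ∈ B, ¬ MLSat P.M P.w φ)

/-- The set of successors of a pointed model: the same model pointed at any `R`-successor
of the distinguished world. -/
def succs {Φ : Type} (P : PointedModel.{u} Φ) : Set (PointedModel.{u} Φ) :=
  {Q | ∃ x : P.M.W, P.M.R P.w x ∧ Q = ⟨P.M, x⟩}

/-- `◇A`: all successors of all models in `A`. -/
def diaSet {Φ : Type} (A : Set (PointedModel.{u} Φ)) : Set (PointedModel.{u} Φ) :=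
  ⋃ P ∈ A, succs P

/-- `SWins m k A B` says that the player S (spoiler) has a winning strategy in the formula
size game `FS_{m,k}(A, B)`: S immediately wins if some literal separates `A` and `B`, and
otherwise S can make a left or right splitting move (against both of D's possible choices)
or a left or right successor move and go on to win. -/
inductive SWins {Φ : Type} :
    ℕ → ℕ → Set (PointedModel.{u} Φ) → Set (PointedModel.{u} Φ) → Prop where
  | win (m k : ℕ) (A B : Set (PointedModel.{u} Φ)) (φ : MLFormula Φ)
      (hlit : IsLiteral φ) (hsep : Separates φ A B) : SWins m k A B
  | splitL (m₁ m₂ k₁ k₂ : ℕ) (A₁ A₂ B : Set (PointedModel.{u} Φ))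
      (h₁ : SWins m₁ k₁ A₁ B) (h₂ : SWins m₂ k₂ A₂ B) :
      SWins (m₁ + m₂) (k₁ + k₂ + 1) (A₁ ∪ A₂) B
  | splitR (m₁ m₂ k₁ k₂ : ℕ) (A B₁ B₂ : Set (PointedModel.{u} Φ))
      (h₁ : SWins m₁ k₁ A B₁) (h₂ : SWins m₂ k₂ A B₂) :
      SWins (m₁ + m₂) (k₁ + k₂ + 1) A (B₁ ∪ B₂)
  | succL (m k : ℕ) (A B : Set (PointedModel.{u} Φ))
      (f : PointedModel.{u} Φ → PointedModel.{u} Φ)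
      (hf : ∀ P ∈ A, f P ∈ succs P) (h : SWins m k (f '' A) (diaSet B)) :
      SWins (m + 1) k A B
  | succR (m k : ℕ) (A B : Set (PointedModel.{u} Φ))
      (g : PointedModel.{u} Φ → PointedModel.{u} Φ)
      (hg : ∀ P ∈ B, g P ∈ succs P) (h : SWins m k (diaSet A) (g '' B)) :
      SWins (m + 1) k A B

/-- **Theorem 3 (Hella–Vilander).**  S has a winning strategy in the formula size game
`FS_{m,k}(A, B)` iff there is an `ML`-formula `φ` with `ms(φ) ≤ m` and `cs(φ) ≤ k`
separating the sets `A` and `B`. -/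

lemma swins_of_sep {Φ : Type} {A B : Set (PointedModel.{u} Φ)} {m k : ℕ}
    (φ : MLFormula Φ) (hm : msize φ ≤ m) (hk : csize φ ≤ k)
    (hsep : Separates φ A B) : SWins m k A B := by
  induction φ generalizing A B m k with
  | pos p => exact .win m k A B (.pos p) trivial hsep
  | neg p => exact .win m k A B (.neg p) trivial hsep
  | and φ ψ ihφ ihψ =>
    simp only [msize, csize] at hm hk
    have hB : B = {P | P ∈ B ∧ ¬ MLSat P.M P.w φ} ∪ {P | P ∈ B ∧ ¬ MLSat P.M P.w ψ} := by
      ext P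
      constructor
      · intro hP
        have := hsep.2 P hP
        simp only [MLSat] at this
        rcases Classical.em (MLSat P.M P.w φ) with h | h
        · exact Or.inr ⟨hP, fun h2 => this ⟨h, h2⟩⟩
        · exact Or.inl ⟨hP, h⟩
      · rintro (⟨h, _⟩ | ⟨h, _⟩) <;> exact h
    have hm' : m = msize φ + (m - msize φ) := by omega
    have hk' : k = csize φ + (k - csize φ - 1) + 1 := by omega
    rw [hB, hm', hk']
    refine .splitR _ _ _ _ _ _ _ ?_ ?_
    · refine ihφ le_rfl le_rfl ⟨fun P hP => (hsep.1 P hP).1, fun P hP => hP.2⟩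
    · refine ihψ (by omega) (by omega) ⟨fun P hP => (hsep.1 P hP).2, fun P hP => hP.2⟩
  | or φ ψ ihφ ihψ =>
    simp only [msize, csize] at hm hk
    have hA : A = {P | P ∈ A ∧ MLSat P.M P.w φ} ∪ {P | P ∈ A ∧ MLSat P.M P.w ψ} := by
      ext P
      constructor
      · intro hP
        rcases hsep.1 P hP with h | h
        · exact Or.inl ⟨hP, h⟩
        · exact Or.inr ⟨hP, h⟩
      · rintro (⟨h, _⟩ | ⟨h, _⟩) <;> exact h
    have hm' : m = msize φ + (m - msize φ) := by omega
    have hk' : k = csize φ + (k - csize φ - 1) + 1 := by omega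
    rw [hA, hm', hk']
    refine .splitL _ _ _ _ _ _ _ ?_ ?_
    · refine ihφ le_rfl le_rfl ⟨fun P hP => hP.2, fun P hP => ?_⟩
      intro h
      exact hsep.2 P hP (Or.inl h)
    · refine ihψ (by omega) (by omega) ⟨fun P hP => hP.2, fun P hP => ?_⟩
      intro h
      exact hsep.2 P hP (Or.inr h)
  | dia φ ih =>
    simp only [msize, csize] at hm hk
    obtain ⟨m', rfl⟩ : ∃ m', m = m' + 1 := ⟨m - 1, by omega⟩
    classical
    have hex : ∀ P : PointedModel.{u} Φ,
        ∃ Q : PointedModel.{u} Φ, P ∈ A → Q ∈ succs P ∧ MLSat Q.M Q.w φ := by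
      intro P
      by_cases hP : P ∈ A
      · obtain ⟨x, hx, hsat⟩ := hsep.1 P hP
        exact ⟨⟨P.M, x⟩, fun _ => ⟨⟨x, hx, rfl⟩, hsat⟩⟩
      · exact ⟨P, fun h => absurd h hP⟩
    choose f hf using hex
    refine .succL m' k A B f (fun P hP => (hf P hP).1) ?_
    refine ih (by omega) hk ⟨?_, ?_⟩
    · rintro Q ⟨P, hP, rfl⟩
      exact (hf P hP).2
    · rintro Q hQ
      simp only [diaSet, Set.mem_iUnion] at hQ
      obtain ⟨P, hP, x, hRx, rfl⟩ := hQ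
      intro h
      exact hsep.2 P hP ⟨x, hRx, h⟩
  | box φ ih =>
    simp only [msize, csize] at hm hk
    obtain ⟨m', rfl⟩ : ∃ m', m = m' + 1 := ⟨m - 1, by omega⟩
    classical
    have hex : ∀ P : PointedModel.{u} Φ,
        ∃ Q : PointedModel.{u} Φ, P ∈ B → Q ∈ succs P ∧ ¬ MLSat Q.M Q.w φ := by
      intro P
      by_cases hP : P ∈ B
      · have h := hsep.2 P hP
        simp only [MLSat] at h
        push_neg at h
        obtain ⟨x, hx, hsat⟩ := h
        exact ⟨⟨P.M, x⟩, fun _ => ⟨⟨x, hx, rfl⟩, hsat⟩⟩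
      · exact ⟨P, fun h => absurd h hP⟩
    choose g hg using hex
    refine .succR m' k A B g (fun P hP => (hg P hP).1) ?_
    refine ih (by omega) hk ⟨?_, ?_⟩
    · rintro Q hQ
      simp only [diaSet, Set.mem_iUnion] at hQ
      obtain ⟨P, hP, x, hRx, rfl⟩ := hQ
      exact hsep.1 P hP x hRx
    · rintro Q ⟨P, hP, rfl⟩
      exact (hg P hP).2

theorem swins_iff_exists_separating_formula {Φ : Type}
    (A B : Set (PointedModel.{u} Φ)) (m k : ℕ) :
    SWins m k A B ↔
      ∃ φ : MLFormula Φ, msize φ ≤ m ∧ csize φ ≤ k ∧ Separates φ A B := by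
  constructor
  · intro h
    induction h with
    | win m k A B φ hlit hsep =>
      refine ⟨φ, ?_, ?_, hsep⟩ <;> cases φ <;> simp_all [IsLiteral, msize, csize]
    | splitL m₁ m₂ k₁ k₂ A₁ A₂ B h₁ h₂ ih₁ ih₂ =>
      obtain ⟨φ₁, hm₁, hk₁, hs₁⟩ := ih₁
      obtain ⟨φ₂, hm₂, hk₂, hs₂⟩ := ih₂
      refine ⟨.or φ₁ φ₂, by simp [msize]; omega, by simp [csize]; omega, ?_, ?_⟩
      · rintro P (hP | hP)
        · exact Or.inl (hs₁.1 P hP)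
        · exact Or.inr (hs₂.1 P hP)
      · intro P hP h
        have h' : MLSat P.M P.w φ₁ ∨ MLSat P.M P.w φ₂ := h
        rcases h' with h' | h'
        · exact hs₁.2 P hP h'
        · exact hs₂.2 P hP h'
    | splitR m₁ m₂ k₁ k₂ A B₁ B₂ h₁ h₂ ih₁ ih₂ =>
      obtain ⟨φ₁, hm₁, hk₁, hs₁⟩ := ih₁
      obtain ⟨φ₂, hm₂, hk₂, hs₂⟩ := ih₂
      refine ⟨.and φ₁ φ₂, by simp [msize]; omega, by simp [csize]; omega, ?_, ?_⟩
      · exact fun P hP => ⟨hs₁.1 P hP, hs₂.1 P hP⟩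
      · rintro P (hP | hP) h
        · exact hs₁.2 P hP h.1
        · exact hs₂.2 P hP h.2
    | succL m k A B f hf h ih =>
      obtain ⟨φ, hm, hk, hs⟩ := ih
      refine ⟨.dia φ, by simp [msize]; omega, hk, ?_, ?_⟩
      · intro P hP
        obtain ⟨x, hRx, hfx⟩ := hf P hP
        have : MLSat (f P).M (f P).w φ := hs.1 (f P) ⟨P, hP, rfl⟩
        rw [hfx] at this
        exact ⟨x, hRx, this⟩
      · rintro P hP ⟨x, hRx, hx⟩
        refine hs.2 ⟨P.M, x⟩ ?_ hx
        simp only [diaSet, Set.mem_iUnion]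
        exact ⟨P, hP, x, hRx, rfl⟩
    | succR m k A B g hg h ih =>
      obtain ⟨φ, hm, hk, hs⟩ := ih
      refine ⟨.box φ, by simp [msize]; omega, hk, ?_, ?_⟩
      · intro P hP x hRx
        refine hs.1 ⟨P.M, x⟩ ?_
        simp only [diaSet, Set.mem_iUnion]
        exact ⟨P, hP, x, hRx, rfl⟩
      · intro P hP hbox
        obtain ⟨x, hRx, hgx⟩ := hg P hP
        refine hs.2 (g P) ⟨P, hP, rfl⟩ ?_
        rw [hgx]
        exact hbox x hRx
  · rintro ⟨φ, hm, hk, hsep⟩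
    exact swins_of_sep φ hm hk hsep
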